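/- arXiv:2509.13115 — 9 statements merged into one kernel-verified Lean document; each statement's English description precedes it below -/
import Mathlib

section
/- Let P be a finite set of real numbers and let S be a finite family of closed intervals in ℝ such that each interval in S contains at least n points of P. Then there exists a subset T ⊆ P of size at most 2n such that every interval in S contains at least n points of T. (One can take T to be the n largest points of P below the smallest right endpoint together with the n smallest points of P above the largest left endpoint, assuming the family is pairwise intersecting on P.) -/
/-! Pairwise intersecting closed intervals on the line have a common point `c` (Helly's theorem in
dimension one). Keep the `n` largest points of `P` that are `≤ c` and the `n` smallest that are
`≥ c`. An interval `[a, b] ∋ c` then contains `n` kept points of the first kind, or `n` of the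
second kind, or else every point of `P ∩ [a, c]` and of `P ∩ [c, b]` was kept. -/

open scoped Classical
open Finset

namespace Finset

variable {α : Type*} [LinearOrder α]

theorem exists_subset_card_le_saturating_Ici (Q : Finset α) (n : ℕ) :
    ∃ T ⊆ Q, #T ≤ n ∧ ∀ a, n ≤ #(T.filter (a ≤ ·)) ∨ Q.filter (a ≤ ·) ⊆ T := by
  induction Q using Finset.induction_on_max generalizing n with
  | empty => exact ⟨∅, subset_rfl, by simp, fun a => Or.inr (by simp)⟩
  | insert x Q hlt ih =>
    cases n with
    | zero => exact ⟨∅, empty_subset _, le_rfl, fun a => Or.inl (Nat.zero_le _)⟩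
    | succ n =>
      obtain ⟨T, hTQ, hT, hsat⟩ := ih n
      have hxT : x ∉ T := fun hx => (hlt x (hTQ hx)).false
      refine ⟨insert x T, insert_subset_insert x hTQ, ?_, fun a => ?_⟩
      · rw [card_insert_of_notMem hxT]
        omega
      rcases le_or_gt a x with hax | hxa
      · refine (hsat a).imp (fun h => ?_) (fun h => ?_)
        · rw [filter_insert, if_pos hax, card_insert_of_notMem (by simp [hxT])]
          omega
        · rw [filter_insert, if_pos hax]
          exact insert_subset_insert x h
      · refine Or.inr fun y hy => ?_
        obtain ⟨hyQ, hay⟩ := mem_filter.1 hy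
        rcases mem_insert.1 hyQ with rfl | hyQ
        · exact absurd hay (not_le.2 hxa)
        · exact absurd (hxa.trans_le hay) (lt_asymm (hlt y hyQ))

theorem exists_subset_card_le_saturating_Iic (Q : Finset α) (n : ℕ) :
    ∃ T ⊆ Q, #T ≤ n ∧ ∀ b, n ≤ #(T.filter (· ≤ b)) ∨ Q.filter (· ≤ b) ⊆ T :=
  exists_subset_card_le_saturating_Ici (α := αᵒᵈ) Q n

theorem exists_card_le_two_mul_multitransversal_Icc (P : Finset α) (n : ℕ) (c : α) :
    ∃ T ⊆ P, #T ≤ 2 * n ∧ ∀ a b, a ≤ c → c ≤ b →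
      n ≤ #(P.filter (· ∈ Set.Icc a b)) → n ≤ #(T.filter (· ∈ Set.Icc a b)) := by
  obtain ⟨T₁, hT₁P, hT₁, hsat₁⟩ := (P.filter (· ≤ c)).exists_subset_card_le_saturating_Ici n
  obtain ⟨T₂, hT₂P, hT₂, hsat₂⟩ := (P.filter (c ≤ ·)).exists_subset_card_le_saturating_Iic n
  refine ⟨T₁ ∪ T₂, union_subset (hT₁P.trans (filter_subset _ _)) (hT₂P.trans (filter_subset _ _)),
    (card_union_le _ _).trans (by omega), fun a b hac hcb hn => ?_⟩
  rcases hsat₁ a with h₁ | h₁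
  · refine h₁.trans (card_le_card fun x hx => ?_)
    obtain ⟨hxT, hax⟩ := mem_filter.1 hx
    exact mem_filter.2 ⟨mem_union_left _ hxT, hax, ((mem_filter.1 (hT₁P hxT)).2).trans hcb⟩
  rcases hsat₂ b with h₂ | h₂
  · refine h₂.trans (card_le_card fun x hx => ?_)
    obtain ⟨hxT, hxb⟩ := mem_filter.1 hx
    exact mem_filter.2 ⟨mem_union_right _ hxT, hac.trans (mem_filter.1 (hT₂P hxT)).2, hxb⟩
  refine hn.trans (card_le_card fun x hx => ?_)
  obtain ⟨hxP, hax, hxb⟩ := mem_filter.1 hx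
  refine mem_filter.2 ⟨?_, hax, hxb⟩
  rcases le_total x c with hxc | hcx
  · exact mem_union_left _ (h₁ (by simp [hxP, hxc, hax]))
  · exact mem_union_right _ (h₂ (by simp [hxP, hcx, hxb]))

end Finset

theorem exists_mem_sInter_of_pairwise_Icc {S : Finset (Set ℝ)}
    (hS : ∀ s ∈ S, ∃ a b : ℝ, s = Set.Icc a b) (hpair : ∀ s ∈ S, ∀ s' ∈ S, (s ∩ s').Nonempty) :
    (⋂₀ (S : Set (Set ℝ))).Nonempty := by
  refine Convex.helly_theorem_set' (𝕜 := ℝ) (fun s hs => ?_) fun G hGS hG => ?_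
  · obtain ⟨a, b, rfl⟩ := hS s hs
    exact convex_Icc a b
  rw [Module.finrank_self] at hG
  interval_cases h : #G
  · simp [card_eq_zero.1 h]
  · obtain ⟨s, rfl⟩ := card_eq_one.1 h
    simpa using hpair s (hGS (mem_singleton_self s)) s (hGS (mem_singleton_self s))
  · obtain ⟨s, s', -, rfl⟩ := card_eq_two.1 h
    simpa using hpair s (hGS (by simp)) s' (hGS (by simp))

/-- If `P` is a finite set of reals, `S` a finite family of closed intervals such that
any two intervals of `S` share a point of `P` and each interval contains at least `n`
points of `P`, then there is `T ⊆ P` of size at most `2n` such that every interval of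
`S` contains at least `n` points of `T`. -/
theorem stmt_0 (n : ℕ) (P : Finset ℝ) (S : Finset (Set ℝ))
    (hint : ∀ s ∈ S, ∃ a b : ℝ, s = Set.Icc a b)
    (hpair : ∀ s ∈ S, ∀ s' ∈ S, ∃ p ∈ P, p ∈ s ∧ p ∈ s')
    (hn : ∀ s ∈ S, n ≤ (P.filter (fun p => p ∈ s)).card) :
    ∃ T ⊆ P, T.card ≤ 2 * n ∧ ∀ s ∈ S, n ≤ (T.filter (fun p => p ∈ s)).card := by
  obtain ⟨c, hc⟩ := exists_mem_sInter_of_pairwise_Icc hint fun s hs s' hs' =>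
    let ⟨p, _, hps, hps'⟩ := hpair s hs s' hs'
    ⟨p, hps, hps'⟩
  obtain ⟨T, hTP, hT, hcover⟩ := P.exists_card_le_two_mul_multitransversal_Icc n c
  refine ⟨T, hTP, hT, fun s hs => ?_⟩
  obtain ⟨a, b, rfl⟩ := hint s hs
  obtain ⟨hac, hcb⟩ := hc _ hs
  -- `convert` only reconciles the classical and the `Set.Icc` instances of `DecidablePred`.
  convert hcover a b hac hcb (by convert hn _ hs)
end

section
/- Let S be a finite family of closed intervals in ℝ with largest left endpoint ℓ and smallest right endpoint r, and let P ⊂ ℝ be finite with every interval of S containing at least n points of P. Then τ'_n(S|_P) ≤ 2n + |P ∩ (r, ℓ)|, where (r,ℓ) is interpreted as empty if ℓ ≤ r. -/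
open scoped Classical

lemma exists_bottom (F : Finset ℝ) (n : ℕ) :
    ∃ A ⊆ F, A.card = min n F.card ∧ ∀ p ∈ F, p ∉ A → ∀ a ∈ A, a ≤ p := by
  classical
  set L := F.sort (· ≤ ·) with hL
  have hnd : L.Nodup := F.sort_nodup _
  have hsorted : L.Pairwise (· ≤ ·) := F.pairwise_sort _
  have hmem : ∀ x, x ∈ L ↔ x ∈ F := fun x => Finset.mem_sort _
  refine ⟨(L.take n).toFinset, ?_, ?_, ?_⟩
  · intro x hx
    rw [List.mem_toFinset] at hx
    exact (hmem x).1 (List.mem_of_mem_take hx)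
  · rw [List.toFinset_card_of_nodup (hnd.sublist (List.take_sublist n L)),
      List.length_take, Finset.length_sort]
  · intro p hp hpA a ha
    rw [List.mem_toFinset] at ha hpA
    have hpL : p ∈ L := (hmem p).2 hp
    have hpd : p ∈ L.drop n := by
      have : p ∈ L.take n ++ L.drop n := by rwa [List.take_append_drop]
      rcases List.mem_append.mp this with h | h
      · exact absurd h hpA
      · exact h
    have hpair : (L.take n ++ L.drop n).Pairwise (· ≤ ·) := by
      rw [List.take_append_drop]; exact hsorted
    exact (List.pairwise_append.mp hpair).2.2 a ha p hpd

lemma exists_top (F : Finset ℝ) (n : ℕ) :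
    ∃ B ⊆ F, B.card = min n F.card ∧ ∀ p ∈ F, p ∉ B → ∀ b ∈ B, p ≤ b := by
  classical
  have hinj : Function.Injective (fun x : ℝ => -x) := fun a b h => by
    simpa using h
  obtain ⟨A, hAsub, hAcard, hAprop⟩ := exists_bottom (F.image (fun x => -x)) n
  refine ⟨A.image (fun x => -x), ?_, ?_, ?_⟩
  · intro b hb
    obtain ⟨a, ha, rfl⟩ := Finset.mem_image.mp hb
    obtain ⟨f, hf, rfl⟩ := Finset.mem_image.mp (hAsub ha)
    simpa using hf
  · rw [Finset.card_image_of_injective _ hinj, hAcard,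
      Finset.card_image_of_injective _ hinj]
  · intro p hp hpB b hb
    obtain ⟨a, ha, rfl⟩ := Finset.mem_image.mp hb
    have hpF' : -p ∈ F.image (fun x => -x) := Finset.mem_image.mpr ⟨p, hp, rfl⟩
    have hpA : -p ∉ A := fun h => hpB (Finset.mem_image.mpr ⟨-p, h, by simp⟩)
    have := hAprop (-p) hpF' hpA a ha
    linarith

/-- For a nonempty finite family `S` of closed intervals (given by endpoint pairs) with
largest left endpoint `ℓ` and smallest right endpoint `r`, and a finite `P ⊂ ℝ` with
every interval of `S` containing at least `n` points of `P`, there is an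
`n`-multitransversal `T ⊆ P` of the trace with `|T| ≤ 2n + |P ∩ (r, ℓ)|`. -/
theorem stmt_1 (n : ℕ) (P : Finset ℝ) (S : Finset (ℝ × ℝ)) (hS : S.Nonempty)
    (hn : ∀ s ∈ S, n ≤ (P.filter (fun p => p ∈ Set.Icc s.1 s.2)).card) :
    ∃ T ⊆ P,
      T.card ≤ 2 * n +
        (P.filter (fun p => S.inf' hS Prod.snd < p ∧ p < S.sup' hS Prod.fst)).card ∧
      ∀ s ∈ S, n ≤ (T.filter (fun p => p ∈ Set.Icc s.1 s.2)).card := by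
  classical
  set ℓ := S.sup' hS Prod.fst with hℓ
  set r := S.inf' hS Prod.snd with hr
  set Fge := P.filter (fun p => ℓ ≤ p) with hFge
  set Fle := P.filter (fun p => p ≤ r) with hFle
  set M := P.filter (fun p => r < p ∧ p < ℓ) with hM
  obtain ⟨A, hAsub, hAcard, hAprop⟩ := exists_bottom Fge n
  obtain ⟨B, hBsub, hBcard, hBprop⟩ := exists_top Fle n
  refine ⟨A ∪ B ∪ M, ?_, ?_, ?_⟩
  · intro x hx
    rcases Finset.mem_union.mp hx with h | h
    · rcases Finset.mem_union.mp h with h | h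
      · exact Finset.mem_filter.mp (hAsub h) |>.1
      · exact Finset.mem_filter.mp (hBsub h) |>.1
    · exact Finset.mem_filter.mp h |>.1
  · calc (A ∪ B ∪ M).card ≤ (A ∪ B).card + M.card := Finset.card_union_le _ _
      _ ≤ A.card + B.card + M.card := by
          exact Nat.add_le_add_right (Finset.card_union_le _ _) _
      _ ≤ n + n + M.card := by
          have h1 : A.card ≤ n := hAcard ▸ Nat.min_le_left _ _
          have h2 : B.card ≤ n := hBcard ▸ Nat.min_le_left _ _
          omega
      _ = 2 * n + M.card := by ring
  · rintro ⟨a, b⟩ hs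
    have haℓ : a ≤ ℓ := Finset.le_sup' Prod.fst hs
    have hrb : r ≤ b := Finset.inf'_le Prod.snd hs
    set Q := P.filter (fun p => p ∈ Set.Icc a b) with hQ
    have hQn : n ≤ Q.card := hn (a, b) hs
    by_cases hcase1 : ∃ p ∈ Q, ℓ ≤ p ∧ p ∉ A
    · obtain ⟨p, hpQ, hpℓ, hpA⟩ := hcase1
      obtain ⟨hpP, hpab⟩ := Finset.mem_filter.mp hpQ
      have hpFge : p ∈ Fge := Finset.mem_filter.mpr ⟨hpP, hpℓ⟩
      have hFgen : n ≤ Fge.card := by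
        by_contra h
        have : A = Fge := Finset.eq_of_subset_of_card_le hAsub
          (by omega)
        exact hpA (this ▸ hpFge)
      have hAn : A.card = n := by omega
      have hAQ : A ⊆ (A ∪ B ∪ M).filter (fun q => q ∈ Set.Icc a b) := by
        intro x hx
        obtain ⟨hxP, hxℓ⟩ := Finset.mem_filter.mp (hAsub hx)
        have hxp : x ≤ p := hAprop p hpFge hpA x hx
        refine Finset.mem_filter.mpr ⟨Finset.mem_union.mpr (Or.inl
          (Finset.mem_union.mpr (Or.inl hx))), ?_⟩
        exact ⟨le_trans haℓ hxℓ, le_trans hxp hpab.2⟩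
      calc n = A.card := hAn.symm
        _ ≤ _ := Finset.card_le_card hAQ
    by_cases hcase2 : ∃ p ∈ Q, p ≤ r ∧ p ∉ B
    · obtain ⟨p, hpQ, hpr, hpB⟩ := hcase2
      obtain ⟨hpP, hpab⟩ := Finset.mem_filter.mp hpQ
      have hpFle : p ∈ Fle := Finset.mem_filter.mpr ⟨hpP, hpr⟩
      have hFlen : n ≤ Fle.card := by
        by_contra h
        have : B = Fle := Finset.eq_of_subset_of_card_le hBsub (by omega)
        exact hpB (this ▸ hpFle)
      have hBn : B.card = n := by omega
      have hBQ : B ⊆ (A ∪ B ∪ M).filter (fun q => q ∈ Set.Icc a b) := by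
        intro x hx
        obtain ⟨hxP, hxr⟩ := Finset.mem_filter.mp (hBsub hx)
        have hxp : p ≤ x := hBprop p hpFle hpB x hx
        refine Finset.mem_filter.mpr ⟨Finset.mem_union.mpr (Or.inl
          (Finset.mem_union.mpr (Or.inr hx))), ?_⟩
        exact ⟨le_trans hpab.1 hxp, le_trans hxr hrb⟩
      calc n = B.card := hBn.symm
        _ ≤ _ := Finset.card_le_card hBQ
    · push_neg at hcase1 hcase2
      have hQT : Q ⊆ (A ∪ B ∪ M).filter (fun q => q ∈ Set.Icc a b) := by
        intro p hp
        obtain ⟨hpP, hpab⟩ := Finset.mem_filter.mp hp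
        refine Finset.mem_filter.mpr ⟨?_, hpab⟩
        by_cases h1 : ℓ ≤ p
        · exact Finset.mem_union.mpr (Or.inl (Finset.mem_union.mpr
            (Or.inl (hcase1 p hp h1))))
        by_cases h2 : p ≤ r
        · exact Finset.mem_union.mpr (Or.inl (Finset.mem_union.mpr
            (Or.inr (hcase2 p hp h2))))
        · push_neg at h1 h2
          exact Finset.mem_union.mpr (Or.inr (Finset.mem_filter.mpr
            ⟨hpP, h2, h1⟩))
      exact le_trans hQn (Finset.card_le_card hQT)
end

section
/- Let B₁,…,B_m be finite families of axis-parallel boxes in ℝ^d (m ≥ 2) such that any two boxes from different families intersect. Then for each coordinate i ∈ [d], there is at most one index j ∈ [m] such that the intersection of the i-th coordinate projections of all boxes in B_j is empty. -/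
/-- An axis-parallel box in `ℝ^d`: a product of `d` closed intervals. -/
def IsBox {d : ℕ} (B : Set (Fin d → ℝ)) : Prop :=
  ∃ a b : Fin d → ℝ, B = {x | ∀ i, x i ∈ Set.Icc (a i) (b i)}

lemma helly_aux {α : Type*} (s : Finset α) (hs : s.Nonempty) (a b : α → ℝ)
    (hemp : ¬ ∃ t : ℝ, ∀ x ∈ s, t ∈ Set.Icc (a x) (b x)) :
    ∃ x ∈ s, ∃ y ∈ s, b y < a x := by
  by_contra h
  push_neg at h
  refine hemp ⟨s.sup' hs a, fun x hx => ⟨Finset.le_sup' a hx, ?_⟩⟩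
  obtain ⟨y, hy, hsup⟩ := Finset.exists_mem_eq_sup' hs a
  rw [hsup]
  exact h y hy x hx

lemma key_aux {d : ℕ} (i : Fin d) (s : Finset (Set (Fin d → ℝ)))
    (hbox : ∀ B ∈ s, IsBox B) (hne : ∀ B ∈ s, B.Nonempty)
    (hemp : (⋂ B ∈ s, (fun x => x i) '' B) = ∅) :
    ∃ B₁ ∈ s, ∃ B₂ ∈ s, ∀ x ∈ B₁, ∀ y ∈ B₂, y i < x i := by
  have hsne : s.Nonempty := by
    by_contra h
    rw [Finset.not_nonempty_iff_eq_empty] at h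
    subst h
    simp at hemp
  choose! a b hab using hbox
  have hmem : ∀ B ∈ s, ∀ x, x ∈ B ↔ ∀ k, x k ∈ Set.Icc (a B k) (b B k) := by
    intro B hB x
    conv_lhs => rw [hab B hB]
    exact Iff.rfl
  have hemp' : ¬ ∃ t : ℝ, ∀ B ∈ s, t ∈ Set.Icc (a B i) (b B i) := by
    rintro ⟨t, ht⟩
    have : t ∈ ⋂ B ∈ s, (fun x => x i) '' B := by
      refine Set.mem_iInter₂.mpr fun B hB => ?_
      obtain ⟨z, hz⟩ := hne B hB
      refine ⟨Function.update z i t, ?_, by simp⟩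
      rw [hmem B hB] at hz ⊢
      intro k
      rcases eq_or_ne k i with rfl | hk
      · simpa using ht B hB
      · simpa [Function.update_of_ne hk] using hz k
    rw [hemp] at this
    exact this
  obtain ⟨B₁, hB₁, B₂, hB₂, hlt⟩ := helly_aux s hsne (fun B => a B i) (fun B => b B i) hemp'
  refine ⟨B₁, hB₁, B₂, hB₂, fun x hx y hy => ?_⟩
  have h1 := ((hmem B₁ hB₁ x).mp hx i).1
  have h2 := ((hmem B₂ hB₂ y).mp hy i).2
  linarith

/-- If `B₁,…,B_m` are finite families of boxes in `ℝ^d` such that any two boxes from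
different families intersect, then for each coordinate `i` there is at most one index
`j` for which the intersection of the `i`-th projections of the boxes of `B_j` is empty. -/
theorem stmt_3 (d m : ℕ) (hm : 2 ≤ m) (F : Fin m → Finset (Set (Fin d → ℝ)))
    (hbox : ∀ j, ∀ B ∈ F j, IsBox B)
    (hcross : ∀ j j' : Fin m, j ≠ j' → ∀ B ∈ F j, ∀ B' ∈ F j', (B ∩ B').Nonempty)
    (i : Fin d) (j j' : Fin m)
    (hj : (⋂ B ∈ F j, (fun x => x i) '' B) = ∅)
    (hj' : (⋂ B ∈ F j', (fun x => x i) '' B) = ∅) :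
    j = j' := by
  by_contra hne
  have hFj : (F j).Nonempty := by
    by_contra h
    rw [Finset.not_nonempty_iff_eq_empty] at h
    rw [h] at hj
    simp at hj
  have hFj' : (F j').Nonempty := by
    by_contra h
    rw [Finset.not_nonempty_iff_eq_empty] at h
    rw [h] at hj'
    simp at hj'
  obtain ⟨B₀, hB₀⟩ := hFj
  obtain ⟨B₀', hB₀'⟩ := hFj'
  have hnej : ∀ B ∈ F j, B.Nonempty := fun B hB => by
    obtain ⟨z, hz⟩ := hcross j j' hne B hB B₀' hB₀'
    exact ⟨z, hz.1⟩
  have hnej' : ∀ B ∈ F j', B.Nonempty := fun B hB => by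
    obtain ⟨z, hz⟩ := hcross j' j (Ne.symm hne) B hB B₀ hB₀
    exact ⟨z, hz.1⟩
  obtain ⟨B₁, hB₁, B₂, hB₂, hlt⟩ := key_aux i (F j) (hbox j) hnej hj
  obtain ⟨B₁', hB₁', B₂', hB₂', hlt'⟩ := key_aux i (F j') (hbox j') hnej' hj'
  obtain ⟨u, hu⟩ := hcross j j' hne B₁ hB₁ B₂' hB₂'
  obtain ⟨v, hv⟩ := hcross j' j (Ne.symm hne) B₁' hB₁' B₂ hB₂
  have h1 := hlt u hu.1 v hv.2
  have h2 := hlt' v hv.1 u hu.2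
  linarith
end

section
/- For any d ≥ 2 and n ≥ 1, there exist a finite family B of 2d boxes in ℝ^d and a finite multiset P of points in ℝ^d such that the intersection of any 2d−1 boxes of B contains at least n points of P, yet every n-multitransversal of B|_P has size at least ⌈2dn/(2d−1)⌉. -/
open scoped Classical

noncomputable def ptv (d : ℕ) (s : Bool) (i : Fin d) : Fin d → ℝ :=
  fun j => if j = i then (if s then 1 else -1) else 0

noncomputable def boxA (d : ℕ) (s : Bool) (i : Fin d) : Fin d → ℝ :=
  fun j => if j = i ∧ s = false then 0 else -1

noncomputable def boxB (d : ℕ) (s : Bool) (i : Fin d) : Fin d → ℝ :=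
  fun j => if j = i ∧ s = true then 0 else 1

noncomputable def boxS (d : ℕ) (s : Bool) (i : Fin d) : Set (Fin d → ℝ) :=
  {x | ∀ j, x j ∈ Set.Icc (boxA d s i j) (boxB d s i j)}

lemma mem_boxS {d : ℕ} (s s' : Bool) (i i' : Fin d) :
    ptv d s' i' ∈ boxS d s i ↔ ¬(s' = s ∧ i' = i) := by
  constructor
  · intro h hc
    obtain ⟨rfl, rfl⟩ := hc
    have := h i'
    simp only [ptv, boxA, boxB, Set.mem_Icc, if_pos rfl] at this
    cases s' <;> simp at this <;> linarith
  · intro h j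
    simp only [ptv, boxA, boxB, Set.mem_Icc]
    rcases eq_or_ne j i' with rfl | hji'
    · rcases eq_or_ne j i with rfl | hji
      · have hs : s' ≠ s := fun hs => h ⟨hs, rfl⟩
        cases s <;> cases s' <;> simp at hs ⊢ <;> norm_num
      · simp only [hji, false_and, if_false]
        cases s' <;> norm_num
    · simp only [if_neg hji']
      constructor <;> split_ifs <;> norm_num

lemma ptv_ne_mem {d : ℕ} (s : Bool) (i : Fin d) : ptv d s i ∉ boxS d s i := by
  rw [mem_boxS]; simp

lemma boxS_inj {d : ℕ} : Function.Injective
    (fun si : Bool × Fin d => boxS d si.1 si.2) := by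
  rintro ⟨s, i⟩ ⟨s', i'⟩ h
  by_contra hne
  have h1 : ptv d s i ∈ boxS d s' i' := by
    rw [mem_boxS]
    intro hc
    exact hne (by simp [Prod.ext_iff, hc.1, hc.2])
  simp only at h
  rw [← h] at h1
  exact ptv_ne_mem s i h1

lemma count_boxes {d : ℕ} (hd : 1 ≤ d) (x : Fin d → ℝ)
    (hx : ∃ si : Bool × Fin d, x = ptv d si.1 si.2) :
    ((Finset.univ : Finset (Bool × Fin d)).filter
      (fun si => x ∈ boxS d si.1 si.2)).card = 2 * d - 1 := by
  obtain ⟨⟨s, i⟩, rfl⟩ := hx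
  have : (Finset.univ : Finset (Bool × Fin d)).filter
      (fun si => ptv d s i ∈ boxS d si.1 si.2) = Finset.univ.erase (s, i) := by
    ext ⟨s', i'⟩
    simp [mem_boxS, Prod.ext_iff, and_comm, eq_comm]
  rw [this, Finset.card_erase_of_mem (Finset.mem_univ _)]
  simp [Finset.card_univ]

lemma sum_countP {d : ℕ} (hd : 1 ≤ d) (T : Multiset (Fin d → ℝ))
    (hT : ∀ x ∈ T, ∃ si : Bool × Fin d, x = ptv d si.1 si.2) :
    ∑ si : Bool × Fin d, Multiset.countP (· ∈ boxS d si.1 si.2) T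
      = (2 * d - 1) * Multiset.card T := by
  induction T using Multiset.induction_on with
  | empty => simp
  | cons a T ih =>
    have ha := hT a (Multiset.mem_cons_self a T)
    have hT' : ∀ x ∈ T, ∃ si : Bool × Fin d, x = ptv d si.1 si.2 :=
      fun x hx => hT x (Multiset.mem_cons_of_mem hx)
    simp only [Multiset.countP_cons, Finset.sum_add_distrib, ih hT',
      Multiset.card_cons]
    have : (∑ si : Bool × Fin d, if a ∈ boxS d si.1 si.2 then 1 else 0)
        = 2 * d - 1 := by
      rw [← Finset.card_filter]
      exact count_boxes hd a ha
    rw [this, mul_add, mul_one]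

/-- For any `d ≥ 2` and `n ≥ 1`, there are a family of `2d` boxes in `ℝ^d` and a finite
multiset `P` of points such that the intersection of any `2d − 1` of the boxes contains
at least `n` points of `P` (with multiplicity), yet every `n`-multitransversal of the
trace has size at least `⌈2dn/(2d−1)⌉`. -/
theorem stmt_7 (d n : ℕ) (hd : 2 ≤ d) (hn : 1 ≤ n) :
    ∃ (B : Finset (Set (Fin d → ℝ))) (P : Multiset (Fin d → ℝ)),
      B.card = 2 * d ∧ (∀ b ∈ B, IsBox b) ∧
      (∀ B' ⊆ B, B'.card = 2 * d - 1 →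
        n ≤ Multiset.card (P.filter fun p => ∀ b ∈ B', p ∈ b)) ∧
      (∀ T : Multiset (Fin d → ℝ), T ≤ P →
        (∀ b ∈ B, n ≤ Multiset.card (T.filter fun p => p ∈ b)) →
        ⌈(2 * d * n : ℚ) / (2 * d - 1)⌉ ≤ (Multiset.card T : ℤ)) := by
  classical
  set Q : Multiset (Fin d → ℝ) :=
    (Finset.univ : Finset (Bool × Fin d)).val.map (fun si => ptv d si.1 si.2) with hQ
  refine ⟨Finset.image (fun si : Bool × Fin d => boxS d si.1 si.2) Finset.univ,
    n • Q, ?_, ?_, ?_, ?_⟩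
  · rw [Finset.card_image_of_injective _ boxS_inj]
    simp [Finset.card_univ, mul_comm]
  · intro b hb
    obtain ⟨⟨s, i⟩, -, rfl⟩ := Finset.mem_image.mp hb
    exact ⟨boxA d s i, boxB d s i, rfl⟩
  · intro B' hB' hcard
    have hcardB : (Finset.image (fun si : Bool × Fin d => boxS d si.1 si.2)
        Finset.univ).card = 2 * d := by
      rw [Finset.card_image_of_injective _ boxS_inj]
      simp [Finset.card_univ, mul_comm]
    have hnotsub : ¬ (Finset.image (fun si : Bool × Fin d => boxS d si.1 si.2)
        Finset.univ) ⊆ B' := by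
      intro h
      have := Finset.card_le_card h
      omega
    obtain ⟨x, hxB, hxB'⟩ := Finset.not_subset.mp hnotsub
    obtain ⟨⟨s, i⟩, -, rfl⟩ := Finset.mem_image.mp hxB
    have hpred : ∀ b ∈ B', ptv d s i ∈ b := by
      intro b hb
      obtain ⟨⟨s', i'⟩, -, rfl⟩ := Finset.mem_image.mp (hB' hb)
      rw [mem_boxS]
      rintro ⟨rfl, rfl⟩
      exact hxB' hb
    have hxQ : ptv d s i ∈ Q := Multiset.mem_map.mpr ⟨(s, i), by simp, rfl⟩
    calc n = n * 1 := (mul_one n).symm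
      _ ≤ n * Multiset.count (ptv d s i) Q :=
          Nat.mul_le_mul_left n (Multiset.one_le_count_iff_mem.mpr hxQ)
      _ = Multiset.count (ptv d s i) (n • Q) := (Multiset.count_nsmul _ _ _).symm
      _ = Multiset.count (ptv d s i)
            ((n • Q).filter fun p => ∀ b ∈ B', p ∈ b) := by
          rw [Multiset.count_filter_of_pos hpred]
      _ ≤ Multiset.card ((n • Q).filter fun p => ∀ b ∈ B', p ∈ b) :=
          Multiset.count_le_card _ _
  · intro T hT hcount
    have hTmem : ∀ x ∈ T, ∃ si : Bool × Fin d, x = ptv d si.1 si.2 := by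
      intro x hx
      have hxP := Multiset.mem_of_le hT hx
      have hn0 : n ≠ 0 := by omega
      rw [Multiset.mem_nsmul, hQ, Multiset.mem_map] at hxP
      obtain ⟨-, hxP⟩ := hxP
      obtain ⟨si, -, rfl⟩ := hxP
      exact ⟨si, rfl⟩
    have key : 2 * d * n ≤ (2 * d - 1) * Multiset.card T := by
      calc 2 * d * n = ∑ _si : Bool × Fin d, n := by
            simp [Finset.card_univ, mul_comm]
        _ ≤ ∑ si : Bool × Fin d, Multiset.countP (· ∈ boxS d si.1 si.2) T := by
            refine Finset.sum_le_sum fun si _ => ?_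
            have h := hcount (boxS d si.1 si.2)
              (Finset.mem_image.mpr ⟨si, Finset.mem_univ _, rfl⟩)
            rwa [Multiset.countP_eq_card_filter]
        _ = (2 * d - 1) * Multiset.card T := sum_countP (by omega) T hTmem
    rw [Int.ceil_le]
    have hpos : (0 : ℚ) < 2 * d - 1 := by
      have : (2 : ℚ) ≤ d := by exact_mod_cast hd
      linarith
    rw [div_le_iff₀ hpos]
    have key' : ((2 * d * n : ℕ) : ℚ) ≤ (((2 * d - 1) * Multiset.card T : ℕ) : ℚ) := by
      exact_mod_cast key
    have h1 : (1 : ℕ) ≤ 2 * d := by omega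
    push_cast [Nat.cast_sub h1] at key'
    push_cast
    linarith
end

section
/- Let P be a finite set in ℝ^d and B a finite family of axis-parallel boxes in ℝ^d. If for every subfamily B' ⊆ B of size at most 2d, the trace B'|_P is intersecting (has a common point of P), then B|_P is intersecting. (Halman's theorem.) -/
/-- Halman's theorem: if every subfamily of at most `2d` boxes has a common point of
`P`, then all boxes of the family have a common point of `P`. -/
theorem stmt_9 (d : ℕ) (hd : 1 ≤ d) (P : Finset (Fin d → ℝ))
    (B : Finset (Set (Fin d → ℝ))) (hbox : ∀ b ∈ B, IsBox b)
    (h : ∀ B' ⊆ B, B'.card ≤ 2 * d → ∃ p ∈ P, ∀ b ∈ B', p ∈ b) :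
    ∃ p ∈ P, ∀ b ∈ B, p ∈ b := by
  classical
  rcases B.eq_empty_or_nonempty with rfl | hB
  · obtain ⟨p, hp, -⟩ := h ∅ (by simp) (by simp)
    exact ⟨p, hp, by simp⟩
  choose! lo hi hspec using hbox
  have hmx : ∀ i : Fin d, ∃ b ∈ B, ∀ b' ∈ B, lo b' i ≤ lo b i :=
    fun i => B.exists_max_image (fun b => lo b i) hB
  have hmn : ∀ i : Fin d, ∃ b ∈ B, ∀ b' ∈ B, hi b i ≤ hi b' i :=
    fun i => B.exists_min_image (fun b => hi b i) hB
  choose mx hmxB hmxle using hmx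
  choose mn hmnB hmnle using hmn
  set B' : Finset (Set (Fin d → ℝ)) :=
    (Finset.univ.image mx) ∪ (Finset.univ.image mn) with hB'
  have hsub : B' ⊆ B := by
    intro b hb
    simp only [hB', Finset.mem_union, Finset.mem_image, Finset.mem_univ, true_and] at hb
    rcases hb with ⟨i, rfl⟩ | ⟨i, rfl⟩
    · exact hmxB i
    · exact hmnB i
  have hcard : B'.card ≤ 2 * d := by
    calc B'.card ≤ (Finset.univ.image mx).card + (Finset.univ.image mn).card :=
          Finset.card_union_le _ _
      _ ≤ d + d := by
          gcongr <;> exact le_trans Finset.card_image_le (by simp)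
      _ = 2 * d := by ring
  obtain ⟨p, hpP, hp⟩ := h B' hsub hcard
  refine ⟨p, hpP, fun b hb => ?_⟩
  rw [hspec b hb]
  simp only [Set.mem_setOf_eq, Set.mem_Icc]
  intro i
  have h1 : p ∈ mx i := hp _ (Finset.mem_union_left _
    (Finset.mem_image_of_mem _ (Finset.mem_univ i)))
  have h2 : p ∈ mn i := hp _ (Finset.mem_union_right _
    (Finset.mem_image_of_mem _ (Finset.mem_univ i)))
  rw [hspec _ (hmxB i)] at h1
  rw [hspec _ (hmnB i)] at h2
  simp only [Set.mem_setOf_eq, Set.mem_Icc] at h1 h2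
  exact ⟨le_trans (hmxle i b hb) (h1 i).1, le_trans (h2 i).2 (hmnle i b hb)⟩
end

section
/- Let P be a finite set in ℝ (d = 1) and B a finite family of closed intervals in ℝ. If for every pair of intervals B, B' ∈ B we have B ∩ B' ∩ P ≠ ∅, then there is a point of P contained in all intervals of B. -/
/-- Halman's theorem in dimension 1: if `P` is a nonempty finite set of reals and every
two intervals of a finite family `B` of closed intervals share a point of `P`, then some
point of `P` lies in all intervals of `B`. -/
theorem stmt_10 (P : Finset ℝ) (hP : P.Nonempty) (B : Finset (Set ℝ))
    (hint : ∀ b ∈ B, ∃ a c : ℝ, b = Set.Icc a c)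
    (h : ∀ b ∈ B, ∀ b' ∈ B, ∃ p ∈ P, p ∈ b ∧ p ∈ b') :
    ∃ p ∈ P, ∀ b ∈ B, p ∈ b := by
  classical
  rcases B.eq_empty_or_nonempty with rfl | hB
  · obtain ⟨p, hp⟩ := hP
    exact ⟨p, hp, by simp⟩
  set S : Set ℝ → Finset ℝ := fun b => P.filter (fun x => x ∈ b) with hS
  have hSne : ∀ b ∈ B, (S b).Nonempty := by
    intro b hb
    obtain ⟨p, hp, hpb, _⟩ := h b hb b hb
    exact ⟨p, Finset.mem_filter.2 ⟨hp, hpb⟩⟩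
  set m : Set ℝ → ℝ := fun b => if hb : (S b).Nonempty then (S b).min' hb else 0 with hm
  have hmem : ∀ b ∈ B, m b ∈ S b := by
    intro b hb
    simp only [hm, dif_pos (hSne b hb)]
    exact Finset.min'_mem _ _
  have hmin : ∀ b ∈ B, ∀ x ∈ S b, m b ≤ x := by
    intro b hb x hx
    simp only [hm, dif_pos (hSne b hb)]
    exact Finset.min'_le _ _ hx
  have hImg : (B.image m).Nonempty := hB.image m
  obtain ⟨b0, hb0, hb0eq⟩ := Finset.mem_image.1 (Finset.max'_mem _ hImg)
  refine ⟨m b0, (Finset.mem_filter.1 (hmem b0 hb0)).1, ?_⟩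
  intro b hb
  obtain ⟨a, c, hac⟩ := hint b hb
  obtain ⟨q, hq, hqb, hqb0⟩ := h b hb b0 hb0
  have h1 : a ≤ m b := (hac ▸ (Finset.mem_filter.1 (hmem b hb)).2 : m b ∈ Set.Icc a c).1
  have h2 : m b ≤ m b0 := hb0eq ▸ Finset.le_max' _ _ (Finset.mem_image_of_mem m hb)
  have h3 : m b0 ≤ q := hmin b0 hb0 q (Finset.mem_filter.2 ⟨hq, hqb0⟩)
  have hqc : q ≤ c := (hac ▸ hqb : q ∈ Set.Icc a c).2
  rw [hac]
  exact ⟨le_trans h1 h2, le_trans h3 hqc⟩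
end

section
/- Let P ⊂ ℝ² be finite and let B₁, B₂, B₃ be finite families of axis-parallel boxes in ℝ² such that every transversal {B₁, B₂, B₃} with B_i ∈ B_i satisfies B₁ ∩ B₂ ∩ B₃ ∩ P ≠ ∅ (contains at least one point of P). Then there exists j ∈ {1,2,3} and a subset S ⊆ P with |S| ≤ 2 such that every box of B_j contains a point of S. -/
/-!
Choose, for every family, the box `C j` with the highest bottom edge and the box `E j` with the
lowest top edge; let `m` be the family whose `E m` is lowest, and `u`, `x` the other two, with
`C x` not higher than `C u`. Applying the hypothesis to `(X, C u, E m)` for each `X` in family `x`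
gives a point `q X ∈ P ∩ X` whose height lies in the horizontal strip common to all boxes of the
families `x` and `u`. Inside that strip only the first coordinate matters. If some `q X` lies
between the largest left edge and the smallest right edge of family `u`, it pierces all of
family `u`. Otherwise every `q X` lies to the left or to the right of that window, which every
box of family `x` meets; the rightmost of the left points and the leftmost of the right points
then pierce all of family `x`.
-/

open Set Finset

open Classical in
noncomputable def boxLo {d : ℕ} (B : Set (Fin d → ℝ)) : Fin d → ℝ :=
  if h : IsBox B then h.choose else 0

open Classical in
noncomputable def boxHi {d : ℕ} (B : Set (Fin d → ℝ)) : Fin d → ℝ :=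
  if h : IsBox B then h.choose_spec.choose else 0

def Pierces {E : Type*} (S : Finset E) (F : Finset (Set E)) : Prop :=
  ∀ B ∈ F, ∃ p ∈ S, p ∈ B

theorem pierces_empty {E : Type*} (S : Finset E) : Pierces S ∅ := by
  simp [Pierces]

namespace IsBox

variable {d : ℕ} {B : Set (Fin d → ℝ)}

theorem mem_iff (hB : IsBox B) {z : Fin d → ℝ} :
    z ∈ B ↔ ∀ i, z i ∈ Icc (boxLo B i) (boxHi B i) := by
  simp only [boxLo, boxHi, dif_pos hB]
  conv_lhs => rw [hB.choose_spec.choose_spec]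
  rfl

theorem boxLo_le_boxHi_of_inter_nonempty {B' : Set (Fin d → ℝ)} (hB : IsBox B) (hB' : IsBox B')
    (h : (B ∩ B').Nonempty) (i : Fin d) : boxLo B i ≤ boxHi B' i := by
  obtain ⟨z, hz, hz'⟩ := h
  exact (hB.mem_iff.1 hz i).1.trans (hB'.mem_iff.1 hz' i).2

theorem mem_iff_fin_two {B : Set (Fin 2 → ℝ)} (hB : IsBox B) {z : Fin 2 → ℝ} :
    z ∈ B ↔ z 0 ∈ Icc (boxLo B 0) (boxHi B 0) ∧ z 1 ∈ Icc (boxLo B 1) (boxHi B 1) := by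
  rw [hB.mem_iff, Fin.forall_fin_two]

end IsBox

section Interval

variable {ι α : Type*} [LinearOrder α]

theorem exists_card_le_one_forall_mem_Icc_of_le (s : Finset ι) {lo hi t : ι → α} {a : α}
    (ht : ∀ X ∈ s, t X ∈ Icc (lo X) (hi X)) (hta : ∀ X ∈ s, t X ≤ a)
    (hhi : ∀ X ∈ s, a ≤ hi X) :
    ∃ T ⊆ s, T.card ≤ 1 ∧ ∀ X ∈ s, ∃ Y ∈ T, t Y ∈ Icc (lo X) (hi X) := by
  rcases s.eq_empty_or_nonempty with rfl | hs
  · exact ⟨∅, subset_refl _, by simp, by simp⟩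
  obtain ⟨Y, hY, hYmax⟩ := s.exists_max_image t hs
  refine ⟨{Y}, singleton_subset_iff.2 hY, by simp, fun X hX => ⟨Y, mem_singleton_self Y, ?_⟩⟩
  exact ⟨(ht X hX).1.trans (hYmax X hX), (hta Y hY).trans (hhi X hX)⟩

theorem exists_card_le_two_forall_mem_Icc (s : Finset ι) {lo hi t : ι → α} {a b : α}
    (ht : ∀ X ∈ s, t X ∈ Icc (lo X) (hi X)) (hlo : ∀ X ∈ s, lo X ≤ b)
    (hhi : ∀ X ∈ s, a ≤ hi X) (hab : ∀ X ∈ s, a ≤ t X → b < t X) :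
    ∃ T ⊆ s, T.card ≤ 2 ∧ ∀ X ∈ s, ∃ Y ∈ T, t Y ∈ Icc (lo X) (hi X) := by
  classical
  obtain ⟨L, hLs, hL, hLt⟩ := exists_card_le_one_forall_mem_Icc_of_le (s.filter (t · ≤ a))
    (fun X hX => ht X (mem_filter.1 hX).1) (fun X hX => (mem_filter.1 hX).2)
    (fun X hX => hhi X (mem_filter.1 hX).1)
  -- the right-hand points are handled by the same lemma in the dual order
  obtain ⟨R, hRs, hR, hRt⟩ := exists_card_le_one_forall_mem_Icc_of_le (α := αᵒᵈ)
    (s.filter (¬ t · ≤ a)) (lo := fun X => OrderDual.toDual (hi X))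
    (hi := fun X => OrderDual.toDual (lo X)) (t := fun X => OrderDual.toDual (t X))
    (a := OrderDual.toDual b)
    (fun X hX => ⟨(ht X (mem_filter.1 hX).1).2, (ht X (mem_filter.1 hX).1).1⟩)
    (fun X hX => (hab X (mem_filter.1 hX).1 (le_of_not_ge (mem_filter.1 hX).2)).le)
    (fun X hX => hlo X (mem_filter.1 hX).1)
  refine ⟨L ∪ R, union_subset (hLs.trans (filter_subset _ _)) (hRs.trans (filter_subset _ _)),
    (card_union_le L R).trans (by omega), fun X hX => ?_⟩
  by_cases hXa : t X ≤ a
  · obtain ⟨Y, hY, hYX⟩ := hLt X (mem_filter.2 ⟨hX, hXa⟩)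
    exact ⟨Y, mem_union_left R hY, hYX⟩
  · obtain ⟨Y, hY, hYX⟩ := hRt X (mem_filter.2 ⟨hX, hXa⟩)
    exact ⟨Y, mem_union_right L hY, hYX.2, hYX.1⟩

end Interval

theorem pierces_or_pierces_of_forall_exists_mem_strip {P : Finset (Fin 2 → ℝ)}
    {Fx Fu : Finset (Set (Fin 2 → ℝ))} (hx : ∀ X ∈ Fx, IsBox X) (hu : ∀ Y ∈ Fu, IsBox Y)
    (hmeet : ∀ X ∈ Fx, ∀ Y ∈ Fu, (X ∩ Y).Nonempty)
    (hstrip : ∀ X ∈ Fx, ∃ p ∈ P, p ∈ X ∧ (∀ B ∈ Fx, p 1 ∈ Icc (boxLo B 1) (boxHi B 1)) ∧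
      ∀ B ∈ Fu, p 1 ∈ Icc (boxLo B 1) (boxHi B 1)) :
    (∃ S ⊆ P, S.card ≤ 1 ∧ Pierces S Fu) ∨ ∃ S ⊆ P, S.card ≤ 2 ∧ Pierces S Fx := by
  classical
  rcases Fu.eq_empty_or_nonempty with rfl | hFu
  · exact Or.inl ⟨∅, empty_subset P, by simp, pierces_empty ∅⟩
  choose! q hqP hqX hqx hqu using hstrip
  obtain ⟨A, hA, hAmax⟩ := Fu.exists_max_image (fun B => boxLo B 0) hFu
  obtain ⟨B, hB, hBmin⟩ := Fu.exists_min_image (fun B => boxHi B 0) hFu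
  by_cases hcore : ∃ X ∈ Fx, q X 0 ∈ Icc (boxLo A 0) (boxHi B 0)
  · obtain ⟨X, hX, hXlo, hXhi⟩ := hcore
    refine Or.inl ⟨{q X}, singleton_subset_iff.2 (hqP X hX), by simp,
      fun Y hY => ⟨q X, mem_singleton_self _, ?_⟩⟩
    exact (hu Y hY).mem_iff_fin_two.2
      ⟨⟨(hAmax Y hY).trans hXlo, hXhi.trans (hBmin Y hY)⟩, hqu X hX Y hY⟩
  obtain ⟨T, hTx, hT, hTq⟩ := exists_card_le_two_forall_mem_Icc Fx (t := fun X => q X 0)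
    (fun X hX => ((hx X hX).mem_iff_fin_two.1 (hqX X hX)).1)
    (fun X hX => (hx X hX).boxLo_le_boxHi_of_inter_nonempty (hu B hB) (hmeet X hX B hB) 0)
    (fun X hX => (hu A hA).boxLo_le_boxHi_of_inter_nonempty (hx X hX)
      (inter_comm X A ▸ hmeet X hX A hA) 0)
    (fun X hX ha => lt_of_not_ge fun hb => hcore ⟨X, hX, ha, hb⟩)
  refine Or.inr ⟨T.image q, fun p hp => ?_, card_image_le.trans hT, fun X hX => ?_⟩
  · obtain ⟨Y, hY, rfl⟩ := mem_image.1 hp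
    exact hqP Y (hTx hY)
  · obtain ⟨Y, hY, hYX⟩ := hTq X hX
    exact ⟨q Y, mem_image_of_mem q hY, (hx X hX).mem_iff_fin_two.2 ⟨hYX, hqx Y (hTx hY) X hX⟩⟩

theorem Fin.exists_ne_ne_ne_apply_le {α : Type*} [LinearOrder α] (g : Fin 3 → α) (m : Fin 3) :
    ∃ u x, u ≠ x ∧ u ≠ m ∧ x ≠ m ∧ g x ≤ g u := by
  obtain ⟨i, j, hij, him, hjm⟩ : ∃ i j : Fin 3, i ≠ j ∧ i ≠ m ∧ j ≠ m := by
    fin_cases m <;> decide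
  rcases le_total (g i) (g j) with h | h
  exacts [⟨j, i, hij.symm, hjm, him, h⟩, ⟨i, j, hij, him, hjm, h⟩]

theorem exists_mem_of_transversal {E : Type*} {P : Finset E} {F : Fin 3 → Finset (Set E)}
    (h : ∀ f : Fin 3 → Set E, (∀ j, f j ∈ F j) → ∃ p ∈ P, ∀ j, p ∈ f j) {i j k : Fin 3}
    (hij : i ≠ j) (hik : i ≠ k) (hjk : j ≠ k) {X Y Z : Set E} (hX : X ∈ F i) (hY : Y ∈ F j)
    (hZ : Z ∈ F k) : ∃ p ∈ P, p ∈ X ∧ p ∈ Y ∧ p ∈ Z := by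
  classical
  have hthird : ∀ l, l ≠ i → l ≠ j → l = k := by
    intro l; omega
  obtain ⟨p, hp, hpf⟩ := h (fun l => if l = i then X else if l = j then Y else Z) fun l => by
    by_cases hli : l = i
    · rwa [if_pos hli, hli]
    by_cases hlj : l = j
    · rwa [if_neg hli, if_pos hlj, hlj]
    rwa [if_neg hli, if_neg hlj, hthird l hli hlj]
  refine ⟨p, hp, ?_, ?_, ?_⟩
  · simpa only [if_pos] using hpf i
  · simpa only [if_neg hij.symm, if_pos] using hpf j
  · simpa only [if_neg hik.symm, if_neg hjk.symm] using hpf k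

/-- Quantitative colorful Halman theorem, case `d = 2`, `n = 1`: if every transversal of
three finite families of boxes in the plane contains a point of `P` in its intersection,
then some family can be pierced by at most two points of `P`. -/
theorem stmt_11 (P : Finset (Fin 2 → ℝ)) (F : Fin 3 → Finset (Set (Fin 2 → ℝ)))
    (hbox : ∀ j, ∀ b ∈ F j, IsBox b)
    (h : ∀ f : Fin 3 → Set (Fin 2 → ℝ), (∀ j, f j ∈ F j) →
      ∃ p ∈ P, ∀ j, p ∈ f j) :
    ∃ j : Fin 3, ∃ S ⊆ P, S.card ≤ 2 ∧ ∀ b ∈ F j, ∃ p ∈ S, p ∈ b := by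
  by_cases hne : ∀ j, (F j).Nonempty
  swap
  · obtain ⟨j, hj⟩ := not_forall.1 hne
    exact ⟨j, ∅, empty_subset P, by simp, Finset.not_nonempty_iff_eq_empty.1 hj ▸ pierces_empty ∅⟩
  choose C hC hCmax using fun j => (F j).exists_max_image (fun B => boxLo B 1) (hne j)
  choose E hE hEmin using fun j => (F j).exists_min_image (fun B => boxHi B 1) (hne j)
  obtain ⟨m, -, hm⟩ := univ.exists_min_image (fun j => boxHi (E j) 1) univ_nonempty
  obtain ⟨u, x, hux, hum, hxm, hxu⟩ := Fin.exists_ne_ne_ne_apply_le (fun j => boxLo (C j) 1) m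
  have hstrip : ∀ X ∈ F x, ∃ p ∈ P, p ∈ X ∧ (∀ B ∈ F x, p 1 ∈ Icc (boxLo B 1) (boxHi B 1)) ∧
      ∀ B ∈ F u, p 1 ∈ Icc (boxLo B 1) (boxHi B 1) := by
    intro X hX
    obtain ⟨p, hp, hpX, hpC, hpE⟩ := exists_mem_of_transversal h hux.symm hxm hum hX (hC u) (hE m)
    have hlo := ((hbox u _ (hC u)).mem_iff_fin_two.1 hpC).2.1
    have hhi := ((hbox m _ (hE m)).mem_iff_fin_two.1 hpE).2.2
    have hEm := fun j B hB => (hm j (mem_univ j)).trans (hEmin j B hB)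
    exact ⟨p, hp, hpX, fun B hB => ⟨(hCmax x B hB).trans (hxu.trans hlo), hhi.trans (hEm x B hB)⟩,
      fun B hB => ⟨(hCmax u B hB).trans hlo, hhi.trans (hEm u B hB)⟩⟩
  have hmeet : ∀ X ∈ F x, ∀ Y ∈ F u, (X ∩ Y).Nonempty := fun X hX Y hY => by
    obtain ⟨p, -, hpX, hpY, -⟩ := exists_mem_of_transversal h hux.symm hxm hum hX hY (hE m)
    exact ⟨p, hpX, hpY⟩
  rcases pierces_or_pierces_of_forall_exists_mem_strip (hbox x) (hbox u) hmeet hstrip with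
    ⟨S, hSP, hS, hSu⟩ | ⟨S, hSP, hS, hSx⟩
  exacts [⟨u, S, hSP, hS.trans one_le_two, hSu⟩, ⟨x, S, hSP, hS, hSx⟩]
end

section
/- For i ∈ [d−1] and k ∈ [d], define q₁^i(k) = d if k ≠ d−i+1 and q₁^i(k) = 1 if k = d−i+1; and q₂^i(k) = d−i if k ≤ d−i and q₂^i(k) = d if d−i+1 ≤ k ≤ d−1 (q₂^i(d) = d). For s = (s₁,…,s_{d−1}) ∈ {1,2}^{d−1} and k ∈ [d] set p_s(k) = min_{i ∈ [d−1]} q^i_{s_i}(k). Then for every s ∈ {1,2}^{d−1} and every i ∈ [d−1], there exists k ∈ [d] such that p_s(k) > q^i_{3−s_i}(k). -/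
/-- `q₁^i(k)`: equal to `1` when `k = d − i + 1`, and `d` otherwise. -/
def q1 (d i k : ℕ) : ℕ := if k = d - i + 1 then 1 else d

/-- `q₂^i(k)`: equal to `d − i` when `k ≤ d − i`, and `d` otherwise. -/
def q2 (d i k : ℕ) : ℕ := if k ≤ d - i then d - i else d

/-- Select `q₂` when the bit is `true` and `q₁` when it is `false`. -/
def qsel (b : Bool) (d i k : ℕ) : ℕ := if b then q2 d i k else q1 d i k

/-- Key combinatorial verification in the lower-bound construction: for every choice
`s ∈ {1,2}^{d−1}` (encoded by booleans) and every `i ∈ [d−1]`, there is `k ∈ [d]` with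
`p_s(k) = min_{j ∈ [d−1]} q^j_{s_j}(k) > q^i_{3−s_i}(k)`. -/
theorem stmt_17 (d : ℕ) (hd : 2 ≤ d) (s : ℕ → Bool) (i : ℕ)
    (hi : i ∈ Finset.Icc 1 (d - 1)) :
    ∃ k ∈ Finset.Icc 1 d, ∀ j ∈ Finset.Icc 1 (d - 1),
      qsel (!(s i)) d i k < qsel (s j) d j k := by
  classical
  simp only [Finset.mem_Icc] at hi
  obtain ⟨hi1, hi2⟩ := hi
  cases hsi : s i with
  | true =>
    refine ⟨d - i + 1, by simp only [Finset.mem_Icc]; omega, ?_⟩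
    intro j hj
    simp only [Finset.mem_Icc] at hj
    have h1 : qsel (!true) d i (d - i + 1) = 1 := by
      simp [qsel, q1]
    rw [h1]
    cases hsj : s j with
    | true =>
      show 1 < q2 d j (d - i + 1)
      rw [q2]
      split <;> omega
    | false =>
      have hne : j ≠ i := by
        intro h; rw [h, hsi] at hsj; exact Bool.noConfusion hsj
      show 1 < q1 d j (d - i + 1)
      rw [q1]
      split <;> omega
  | false =>
    have hP : ∃ m, (i ≤ m ∧ m ≤ d - 1 ∧ s m = true) ∨ m = d := ⟨d, Or.inr rfl⟩
    set i0 := Nat.find hP with hi0def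
    have hspec := Nat.find_spec hP
    have hmin : ∀ m < i0, ¬((i ≤ m ∧ m ≤ d - 1 ∧ s m = true) ∨ m = d) :=
      fun m hm => Nat.find_min hP hm
    rw [← hi0def] at hspec
    have hi0le : i0 ≤ d := by rcases hspec with ⟨_, h, _⟩ | h <;> omega
    have hi0gt : i < i0 := by
      rcases Nat.lt_or_ge i i0 with h | h
      · exact h
      · exfalso
        rcases hspec with ⟨h1, h2, h3⟩ | h4
        · have : i0 = i := le_antisymm h h1
          rw [this, hsi] at h3; exact Bool.noConfusion h3
        · omega
    refine ⟨d - i0 + 1, by simp only [Finset.mem_Icc]; omega, ?_⟩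
    intro j hj
    simp only [Finset.mem_Icc] at hj
    have h1 : qsel (!false) d i (d - i0 + 1) = d - i := by
      simp only [qsel, Bool.not_false, if_pos, q2]
      rw [if_pos (by omega)]
    rw [h1]
    cases hsj : s j with
    | true =>
      show d - i < q2 d j (d - i0 + 1)
      rw [q2]
      split
      · rename_i hk
        have hji : j < i := by
          by_contra hc
          exact (hmin j (by omega)) (Or.inl ⟨by omega, hj.2, hsj⟩)
        omega
      · omega
    | false =>
      have hne : j ≠ i0 := by
        intro h
        rcases hspec with ⟨_, _, h3⟩ | h4
        · rw [← h, hsj] at h3; exact Bool.noConfusion h3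
        · omega
      show d - i < q1 d j (d - i0 + 1)
      rw [q1]
      split <;> omega
end

section
/- For all integers p ≥ q ≥ 2 and d ≥ 1, there exists N = N(p,q,d) such that: for any finite set P ⊂ ℝ^d and any finite family B of axis-parallel boxes in ℝ^d whose trace B|_P has the (p,q) property and does not contain the empty set, the piercing number τ(B|_P) is at most N. -/
open Finset

namespace OrthantPiercing

section Ramsey

variable {γ κ : Type*} [LinearOrder γ] [Fintype κ] [Nonempty κ]

theorem exists_endHomogeneous (c : γ → γ → κ) (L : ℕ) (S : Finset γ)
    (hS : (Fintype.card κ + 1) ^ L ≤ #S) :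
    ∃ T ⊆ S, #T = L ∧ ∃ f : γ → κ, ∀ i ∈ T, ∀ j ∈ T, i < j → c i j = f i := by
  classical
  induction L generalizing S with
  | zero => exact ⟨∅, empty_subset _, rfl, fun _ => Classical.arbitrary κ, by simp⟩
  | succ L ih =>
    have hSne : S.Nonempty := card_pos.1 (lt_of_lt_of_le (by positivity) hS)
    set a := S.min' hSne
    have hfiber : #(univ : Finset κ) * (Fintype.card κ + 1) ^ L ≤ #(S.erase a) := by
      rw [card_erase_of_mem (S.min'_mem hSne), card_univ]
      have h1 : 1 ≤ (Fintype.card κ + 1) ^ L := Nat.one_le_pow _ _ (by omega)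
      have h2 : (Fintype.card κ + 1) ^ (L + 1)
          = Fintype.card κ * (Fintype.card κ + 1) ^ L + (Fintype.card κ + 1) ^ L := by ring
      omega
    obtain ⟨k, -, hk⟩ := exists_le_card_fiber_of_mul_le_card_of_maps_to
      (fun j _ => mem_univ (c a j)) univ_nonempty hfiber
    obtain ⟨T, hTS, hTcard, f, hf⟩ := ih _ hk
    have haT : a ∉ T := fun h => by simpa using (mem_filter.1 (hTS h)).1
    have hlt : ∀ j ∈ T, a < j := fun j hj =>
      lt_of_le_of_ne (S.min'_le j (mem_of_mem_erase (mem_filter.1 (hTS hj)).1))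
        (fun h => haT (h ▸ hj))
    refine ⟨insert a T, insert_subset (S.min'_mem hSne)
      (hTS.trans ((filter_subset _ _).trans (erase_subset _ _))),
      by rw [card_insert_of_notMem haT, hTcard], Function.update f a k, ?_⟩
    intro i hi j hj hij
    rcases mem_insert.1 hi with rfl | hiT <;> rcases mem_insert.1 hj with rfl | hjT
    · exact absurd hij (lt_irrefl _)
    · simpa using (mem_filter.1 (hTS hjT)).2
    · exact absurd (hij.trans (hlt i hiT)) (lt_irrefl _)
    · rw [Function.update_of_ne (by rintro rfl; exact haT hiT)]
      exact hf i hiT j hjT hij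

theorem exists_monochromatic (m : ℕ) :
    ∃ N : ℕ, ∀ (c : γ → γ → κ) (S : Finset γ), N ≤ #S →
      ∃ T ⊆ S, #T = m ∧ ∃ k : κ, ∀ i ∈ T, ∀ j ∈ T, i < j → c i j = k := by
  classical
  refine ⟨(Fintype.card κ + 1) ^ (Fintype.card κ * m), fun c S hS => ?_⟩
  obtain ⟨T, hTS, hTcard, f, hf⟩ := exists_endHomogeneous c _ S hS
  obtain ⟨k, -, hk⟩ := exists_le_card_fiber_of_mul_le_card_of_maps_to
    (fun i _ => mem_univ (f i)) univ_nonempty (by rw [card_univ, hTcard])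
  obtain ⟨U, hUT, hUcard⟩ := exists_subset_card_eq hk
  refine ⟨U, fun i hi => hTS (mem_filter.1 (hUT hi)).1, hUcard, k, fun i hi j hj hij => ?_⟩
  rw [hf i (mem_filter.1 (hUT hi)).1 j (mem_filter.1 (hUT hj)).1 hij, (mem_filter.1 (hUT hi)).2]

end Ramsey

theorem exists_card_le_card_mul_card_fiber {σ τ : Type*} [DecidableEq τ] {s : Finset σ}
    {t : Finset τ} {f : σ → τ} (hf : ∀ a ∈ s, f a ∈ t) (ht : t.Nonempty) :
    ∃ y ∈ t, #s ≤ #t * #{a ∈ s | f a = y} := by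
  have hpos : (0 : ℚ) < #t := by exact_mod_cast ht.card_pos
  obtain ⟨y, hy, hle⟩ := exists_le_card_fiber_of_nsmul_le_card_of_maps_to hf ht
    (b := (#s : ℚ) / #t) (by rw [nsmul_eq_mul, mul_div_cancel₀ _ hpos.ne'])
  rw [div_le_iff₀ hpos] at hle
  exact ⟨y, hy, by rw [mul_comm]; exact_mod_cast hle⟩

open scoped Classical

variable {α ι β : Type*} [LinearOrder β] {D : ℕ}

/-- The member `i ∈ F` is the orthant below the corner `v i`, pulled back to `α` along `ρ`. -/
def HasPTwoProperty (p : ℕ) (X : Finset α) (ρ : α → Fin D → β) (v : ι → Fin D → β)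
    (F : Finset ι) : Prop :=
  ∀ A ⊆ F, #A = p → ∃ i ∈ A, ∃ j ∈ A, i ≠ j ∧ ∃ x ∈ X, ρ x ≤ v i ∧ ρ x ≤ v j

theorem HasPTwoProperty.mono {p : ℕ} {X : Finset α} {ρ : α → Fin D → β} {v : ι → Fin D → β}
    {F F' : Finset ι} (h : HasPTwoProperty p X ρ v F) (hF' : F' ⊆ F) :
    HasPTwoProperty p X ρ v F' :=
  fun A hA => h A (hA.trans hF')

/-- `F.sigma fun i => range (w i)` is `F` with multiplicities `w`; two copies of a member with
nonempty trace meet. -/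
theorem HasPTwoProperty.sigma {p : ℕ} {X : Finset α} {ρ : α → Fin D → β} {v : ι → Fin D → β}
    {F : Finset ι} (hF : HasPTwoProperty p X ρ v F) (hne : ∀ i ∈ F, ∃ x ∈ X, ρ x ≤ v i)
    (w : ι → ℕ) :
    HasPTwoProperty p X ρ (fun s : (_ : ι) × ℕ => v s.1) (F.sigma fun i => range (w i)) := by
  intro A hA hAcard
  by_cases hinj : Set.InjOn Sigma.fst (A : Set ((_ : ι) × ℕ))
  · have himg : A.image Sigma.fst ⊆ F := fun i hi => by
      obtain ⟨s, hs, rfl⟩ := mem_image.1 hi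
      exact (mem_sigma.1 (hA hs)).1
    obtain ⟨_, hi, _, hj, hij, x, hx, hxi, hxj⟩ :=
      hF _ himg (by rw [card_image_of_injOn hinj, hAcard])
    obtain ⟨s, hs, rfl⟩ := mem_image.1 hi
    obtain ⟨s', hs', rfl⟩ := mem_image.1 hj
    exact ⟨s, hs, s', hs', fun h => hij (h ▸ rfl), x, hx, hxi, hxj⟩
  · simp only [Set.InjOn, not_forall] at hinj
    obtain ⟨s, hs, s', hs', hss', hne'⟩ := hinj
    obtain ⟨x, hx, hxs⟩ := hne s.1 (mem_sigma.1 (hA hs)).1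
    exact ⟨s, hs, s', hs', hne', x, hx, hxs, show ρ x ≤ v s'.1 from hss' ▸ hxs⟩

theorem forall_le_of_le_min'_of_le_max' [LinearOrder ι] {T : Finset ι} (hT : T.Nonempty)
    {v : ι → Fin D → β} (b : Fin D → Bool)
    (hb : ∀ i ∈ T, ∀ j ∈ T, i < j → ∀ k, (v i k ≤ v j k ↔ b k = true))
    {z : Fin D → β} (hmin : z ≤ v (T.min' hT)) (hmax : z ≤ v (T.max' hT)) :
    ∀ i ∈ T, z ≤ v i := by
  intro i hi k
  cases hk : b k
  · rcases (T.le_max' i hi).eq_or_lt with h | h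
    · exact h ▸ hmax k
    · have : ¬ v i k ≤ v (T.max' hT) k := fun hle => by
        simpa [hk] using (hb i hi _ (T.max'_mem hT) h k).1 hle
      exact (hmax k).trans (not_le.1 this).le
  · rcases (T.min'_le i hi).eq_or_lt with h | h
    · exact h ▸ hmin k
    · exact (hmin k).trans ((hb _ (T.min'_mem hT) i hi h k).2 hk)

theorem exists_common_point_of_hasPTwoProperty (p D : ℕ) :
    ∃ R : ℕ, ∀ (X : Finset α) (ρ : α → Fin D → β) (F : Finset ι) (v : ι → Fin D → β),
      HasPTwoProperty p X ρ v F → R ≤ #F →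
        ∃ G ⊆ F, #G = D + 1 ∧ ∃ x ∈ X, ∀ i ∈ G, ρ x ≤ v i := by
  let : LinearOrder ι := WellOrderingRel.isWellOrder.linearOrder
  obtain ⟨R, hR⟩ := exists_monochromatic (γ := ι) (κ := Option (Fin D → Bool)) (p + D + 2)
  refine ⟨R, fun X ρ F v hF hRF => ?_⟩
  let Meets (i j : ι) : Prop := ∃ x ∈ X, ρ x ≤ v i ∧ ρ x ≤ v j
  let c (i j : ι) : Option (Fin D → Bool) :=
    if Meets i j then some fun k => decide (v i k ≤ v j k) else none
  obtain ⟨T, hTF, hTcard, col, hcol⟩ := hR c F hRF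
  cases col with
  | none =>
    obtain ⟨A, hAT, hAcard⟩ := exists_subset_card_eq (show p ≤ #T by omega)
    obtain ⟨i, hi, j, hj, hij, x, hx, hxi, hxj⟩ := hF A (hAT.trans hTF) hAcard
    rcases hij.lt_or_gt with h | h
    · simpa [c, Meets, show Meets i j from ⟨x, hx, hxi, hxj⟩] using hcol i (hAT hi) j (hAT hj) h
    · simpa [c, Meets, show Meets j i from ⟨x, hx, hxj, hxi⟩] using hcol j (hAT hj) i (hAT hi) h
  | some b =>
    have hcol' : ∀ i ∈ T, ∀ j ∈ T, i < j → Meets i j ∧ ∀ k, (v i k ≤ v j k ↔ b k = true) := by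
      intro i hi j hj hij
      have := hcol i hi j hj hij
      by_cases hm : Meets i j
      · simp only [c, if_pos hm, Option.some.injEq] at this
        exact ⟨hm, fun k => by simp [← this]⟩
      · simp [c, if_neg hm] at this
    have hT : T.Nonempty := card_pos.1 (by omega)
    obtain ⟨⟨x, hx, hxmin, hxmax⟩, -⟩ := hcol' _ (T.min'_mem hT) _ (T.max'_mem hT)
      (T.min'_lt_max'_of_card (by omega))
    obtain ⟨G, hGT, hGcard⟩ := exists_subset_card_eq (show D + 1 ≤ #T by omega)
    exact ⟨G, hGT.trans hTF, hGcard, x, hx, fun i hi => forall_le_of_le_min'_of_le_max' hT b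
      (fun i hi j hj hij => (hcol' i hi j hj hij).2) hxmin hxmax i (hGT hi)⟩

/-- A corner that minimises no coordinate can be dropped. -/
theorem exists_forall_le_of_forall_erase_le (v : ι → Fin D → β) {G : Finset ι} (hG : D < #G) :
    ∃ y ∈ G, ∀ z : Fin D → β, (∀ i ∈ G.erase y, z ≤ v i) → ∀ i ∈ G, z ≤ v i := by
  have hGne : G.Nonempty := card_pos.1 (by omega)
  choose a haG hamin using fun k : Fin D => G.exists_min_image (v · k) hGne
  obtain ⟨y, hyG, hya⟩ := exists_mem_notMem_of_card_lt_card
    (show #(univ.image a) < #G from (card_image_le.trans (by simp)).trans_lt hG)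
  refine ⟨y, hyG, fun z hz i hi k => (hz (a k) (mem_erase.2 ⟨?_, haG k⟩) k).trans (hamin k i hi)⟩
  rintro h
  exact hya (mem_image.2 ⟨k, mem_univ _, h⟩)

theorem card_filter_subset_le_choose {F G : Finset ι} (hGF : G ⊆ F) (R : ℕ) :
    #{A ∈ F.powersetCard R | G ⊆ A} ≤ (#F - #G).choose (R - #G) := by
  rw [← card_sdiff_of_subset hGF, ← card_powersetCard]
  refine card_le_card_of_injOn (· \ G) (fun A hA => ?_) (fun A hA A' hA' h => ?_)
  · obtain ⟨hA, hGA⟩ := mem_filter.1 hA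
    obtain ⟨hAF, hAcard⟩ := mem_powersetCard.1 hA
    exact mem_powersetCard.2 ⟨sdiff_subset_sdiff hAF le_rfl, by
      rw [card_sdiff_of_subset hGA, hAcard]⟩
  · rw [← sdiff_union_of_subset (mem_filter.1 hA).2, ← sdiff_union_of_subset (mem_filter.1 hA').2]
    exact congrArg (· ∪ G) h

theorem choose_le_card_mul_choose_of_forall_exists_subset {F : Finset ι}
    {𝒜 : Finset (Finset ι)} {r R : ℕ} (h𝒜 : 𝒜 ⊆ F.powersetCard r) (hrR : r ≤ R) (hR : R ≤ #F)
    (hcover : ∀ A ∈ F.powersetCard R, ∃ G ∈ 𝒜, G ⊆ A) :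
    (#F).choose r ≤ #𝒜 * R.choose r := by
  have hcount : #(F.powersetCard R) * 1 ≤ #𝒜 * (#F - r).choose (R - r) := by
    refine card_mul_le_card_mul (fun A G => G ⊆ A) (fun A hA => ?_) (fun G hG => ?_)
    · obtain ⟨G, hG, hGA⟩ := hcover A hA
      exact card_pos.2 ⟨G, (mem_bipartiteAbove _).2 ⟨hG, hGA⟩⟩
    · obtain ⟨hGF, hGcard⟩ := mem_powersetCard.1 (h𝒜 hG)
      rw [← hGcard]
      exact card_filter_subset_le_choose hGF R
  have hpos : 0 < (#F - r).choose (R - r) := Nat.choose_pos (by omega)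
  rw [card_powersetCard, mul_one] at hcount
  refine le_of_mul_le_mul_right ?_ hpos
  calc (#F).choose r * (#F - r).choose (R - r) = (#F).choose R * R.choose r :=
        (Nat.choose_mul hrR).symm
    _ ≤ #𝒜 * (#F - r).choose (R - r) * R.choose r := Nat.mul_le_mul_right _ hcount
    _ = #𝒜 * R.choose r * (#F - r).choose (R - r) := by ring

theorem exists_point_card_le_choose_mul {X : Finset α} {ρ : α → Fin D → β} {v : ι → Fin D → β}
    {F : Finset ι} {𝒢 : Finset (Finset ι)} (h𝒢F : 𝒢 ⊆ F.powersetCard (D + 1))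
    (h𝒢 : ∀ G ∈ 𝒢, ∃ x ∈ X, ∀ i ∈ G, ρ x ≤ v i) (hne : 𝒢.Nonempty) :
    ∃ x ∈ X, #𝒢 ≤ (#F).choose D * #{i ∈ F | ρ x ≤ v i} := by
  have hy : ∀ G ∈ 𝒢, ∃ y ∈ G, ∀ z : Fin D → β, (∀ i ∈ G.erase y, z ≤ v i) → ∀ i ∈ G, z ≤ v i :=
    fun G hG => exists_forall_le_of_forall_erase_le v
      (by rw [(mem_powersetCard.1 (h𝒢F hG)).2]; omega)
  obtain ⟨G₀, hG₀⟩ := hne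
  have : Nonempty ι := ⟨(hy G₀ hG₀).choose⟩
  choose! y hyG hyctl using hy
  have hmaps : ∀ G ∈ 𝒢, G.erase (y G) ∈ F.powersetCard D := fun G hG => by
    obtain ⟨hGF, hGcard⟩ := mem_powersetCard.1 (h𝒢F hG)
    exact mem_powersetCard.2 ⟨(erase_subset _ _).trans hGF, by
      rw [card_erase_of_mem (hyG G hG), hGcard]; rfl⟩
  obtain ⟨S₀, -, h𝒢𝒮⟩ := exists_card_le_card_mul_card_fiber hmaps ⟨_, hmaps G₀ hG₀⟩
  rw [card_powersetCard] at h𝒢𝒮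
  set 𝒮 := {G ∈ 𝒢 | G.erase (y G) = S₀}
  obtain ⟨G₁, hG₁⟩ : 𝒮.Nonempty :=
    card_pos.1 (Nat.pos_of_mul_pos_left ((card_pos.2 ⟨G₀, hG₀⟩).trans_le h𝒢𝒮))
  obtain ⟨hG₁𝒢, hG₁S₀⟩ := mem_filter.1 hG₁
  obtain ⟨x, hx, hxG₁⟩ := h𝒢 G₁ hG₁𝒢
  -- `x` lies below every corner of `S₀ ⊆ G₁`, hence below `y G` for each `G` in the fibre
  refine ⟨x, hx, h𝒢𝒮.trans (Nat.mul_le_mul_left _ ?_)⟩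
  refine card_le_card_of_injOn y (fun G hG => ?_) (fun G hG G' hG' h => ?_)
  · obtain ⟨hG𝒢, hGS₀⟩ := mem_filter.1 hG
    refine mem_filter.2 ⟨(mem_powersetCard.1 (h𝒢F hG𝒢)).1 (hyG G hG𝒢),
      hyctl G hG𝒢 _ (fun i hi => hxG₁ i ?_) _ (hyG G hG𝒢)⟩
    rw [hGS₀, ← hG₁S₀] at hi
    exact mem_of_mem_erase hi
  · obtain ⟨hG𝒢, hGS₀⟩ := mem_filter.1 hG
    obtain ⟨hG'𝒢, hG'S₀⟩ := mem_filter.1 hG'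
    calc G = insert (y G) S₀ := by rw [← hGS₀, insert_erase (hyG G hG𝒢)]
      _ = G' := by rw [h, ← hG'S₀, insert_erase (hyG G' hG'𝒢)]

/-- A discrete fractional Helly theorem for orthants. -/
theorem exists_point_mem_many (p D : ℕ) :
    ∃ R K : ℕ, 0 < K ∧ ∀ (X : Finset α) (ρ : α → Fin D → β) (F : Finset ι) (v : ι → Fin D → β),
      HasPTwoProperty p X ρ v F → R ≤ #F → ∃ x ∈ X, #F - D ≤ K * #{i ∈ F | ρ x ≤ v i} := by
  obtain ⟨R₀, hR₀⟩ := exists_common_point_of_hasPTwoProperty (α := α) (ι := ι) (β := β) p D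
  set R := max R₀ (D + 1)
  refine ⟨R, R.choose (D + 1) * (D + 1), Nat.mul_pos (Nat.choose_pos (le_max_right _ _))
    D.succ_pos, fun X ρ F v hF hRF => ?_⟩
  set 𝒢 := {G ∈ F.powersetCard (D + 1) | ∃ x ∈ X, ∀ i ∈ G, ρ x ≤ v i}
  have hmany : (#F).choose (D + 1) ≤ #𝒢 * R.choose (D + 1) := by
    refine choose_le_card_mul_choose_of_forall_exists_subset (filter_subset _ _) (le_max_right _ _)
      hRF fun A hA => ?_
    obtain ⟨hAF, hAcard⟩ := mem_powersetCard.1 hA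
    obtain ⟨G, hGA, hGcard, hG⟩ := hR₀ X ρ A v (hF.mono hAF) (hAcard ▸ le_max_left _ _)
    exact ⟨G, mem_filter.2 ⟨mem_powersetCard.2 ⟨hGA.trans hAF, hGcard⟩, hG⟩, hGA⟩
  have h𝒢 : 𝒢.Nonempty := card_pos.1 (Nat.pos_of_mul_pos_right
    ((Nat.choose_pos (show D + 1 ≤ #F by omega)).trans_le hmany))
  obtain ⟨x, hx, hx𝒢⟩ := exists_point_card_le_choose_mul (filter_subset _ _)
    (fun G hG => (mem_filter.1 hG).2) h𝒢
  refine ⟨x, hx, le_of_mul_le_mul_left ?_ (Nat.choose_pos (show D ≤ #F by omega))⟩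
  calc (#F).choose D * (#F - D) = (#F).choose (D + 1) * (D + 1) :=
        (Nat.choose_succ_right_eq _ _).symm
    _ ≤ (#F).choose D * #{i ∈ F | ρ x ≤ v i} * R.choose (D + 1) * (D + 1) := by
        gcongr; exact hmany.trans (Nat.mul_le_mul_right _ hx𝒢)
    _ = (#F).choose D * (R.choose (D + 1) * (D + 1) * #{i ∈ F | ρ x ≤ v i}) := by ring

theorem countP_take_le_countP_take_add (l : List α) (p : α → Bool) {m n : ℕ} (hmn : m ≤ n) :
    (l.take n).countP p ≤ (l.take m).countP p + (n - m) := by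
  obtain ⟨k, rfl⟩ := Nat.exists_eq_add_of_le hmn
  rw [List.take_add, List.countP_append, Nat.add_sub_cancel_left]
  exact Nat.add_le_add_left (List.countP_le_length.trans (List.length_take_le _ _)) _

theorem eq_false_of_mem_dropWhile {l : List α} {q : α → Bool}
    (hl : l.Pairwise fun a b => q b → q a) {a : α} (ha : a ∈ l.dropWhile q) : q a = false := by
  induction l with
  | nil => simp at ha
  | cons x l ih =>
    rw [List.pairwise_cons] at hl
    by_cases hx : q x
    · rw [List.dropWhile_cons_of_pos hx] at ha
      exact ih hl.2 ha
    · rw [List.dropWhile_cons_of_neg hx] at ha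
      rcases List.mem_cons.1 ha with rfl | ha
      · simpa using hx
      · simpa using mt (hl.1 a ha) hx

/-- The `4 K` candidate prefixes do not depend on `p` and `q`; this is what bounds the size of
the nets below. -/
theorem exists_dense_prefix {ls : List α} {p q : α → Prop} (hpq : ∀ a, p a → q a)
    (hls : ls.Pairwise fun a b => q b → q a) {K : ℕ} (hK : 2 * K ≤ ls.length)
    (hdense : ls.length < K * ls.countP (p ·)) :
    ∃ k < 4 * K, (∀ a ∈ ls.take (ls.length / (2 * K) * k), q a) ∧
      ls.length < 2 * K * (ls.take (ls.length / (2 * K) * k)).countP (p ·) := by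
  set m := ls.length
  have hKpos : 0 < K := Nat.pos_of_ne_zero (by rintro rfl; simp at hdense)
  have hc : 0 < m / (2 * K) := Nat.div_pos hK (by omega)
  have hcm : m / (2 * K) * (2 * K) ≤ m := Nat.div_mul_le_self m (2 * K)
  have hmc : m < m / (2 * K) * (2 * K) + 2 * K := Nat.lt_div_mul_add (by omega)
  set c := m / (2 * K)
  -- the `q`-points form a prefix of length `j`, which contains all `p`-points
  set j := (ls.takeWhile (q ·)).length
  have htake : ls.takeWhile (q ·) = ls.take j := List.prefix_iff_eq_take.1 (List.takeWhile_prefix _)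
  have hcount : ls.countP (p ·) = (ls.take j).countP (p ·) := by
    conv_lhs => rw [← List.takeWhile_append_dropWhile (p := (q ·)) (l := ls)]
    rw [List.countP_append, htake, Nat.add_eq_left, List.countP_eq_zero]
    intro a ha hpa
    simpa [hpq a (of_decide_eq_true hpa)] using eq_false_of_mem_dropWhile
      (hls.imp fun h hb => decide_eq_true (h (of_decide_eq_true hb))) ha
  have hjm : j ≤ m := (List.takeWhile_prefix _).length_le
  have hkj : c * (j / c) ≤ j := Nat.mul_div_le j c
  have hmod : j - c * (j / c) < c := by
    have := Nat.div_add_mod j c; have := Nat.mod_lt j hc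
    omega
  refine ⟨j / c, (Nat.div_lt_iff_lt_mul hc).2 (by nlinarith), fun a ha => ?_, ?_⟩
  · have ha' := htake ▸ List.take_subset_take_left ls hkj ha
    simpa using List.mem_takeWhile_imp ha'
  · have hle := countP_take_le_countP_take_add ls (p ·) hkj
    have hK' := Nat.mul_le_mul_left K
      (show ls.countP (p ·) + 1 ≤ (ls.take (c * (j / c))).countP (p ·) + c by omega)
    nlinarith

theorem exists_orthant_net (D K : ℕ) :
    ∃ s : ℕ, ∀ (ρ : α → Fin D → β) (l : List α), ∃ S : Finset α, (∀ y ∈ S, y ∈ l) ∧ #S ≤ s ∧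
      ∀ v : Fin D → β, l.length < K * l.countP (ρ · ≤ v) → ∃ y ∈ S, ρ y ≤ v := by
  induction D generalizing K with
  | zero =>
    refine ⟨1, fun ρ l => ?_⟩
    cases l with
    | nil => exact ⟨∅, by simp, by simp, fun v hv => by simp at hv⟩
    | cons a l => exact ⟨{a}, by simp, by simp, fun v _ => ⟨a, mem_singleton_self a, finZeroElim⟩⟩
  | succ D ih =>
    obtain ⟨s, hs⟩ := ih (2 * K)
    refine ⟨2 * K + 4 * K * s, fun ρ l => ?_⟩
    by_cases hl : l.length < 2 * K
    · refine ⟨l.toFinset, fun y hy => List.mem_toFinset.1 hy,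
        (List.toFinset_card_le l).trans (by omega), fun v hv => ?_⟩
      obtain ⟨y, hy, hyv⟩ :=
        List.countP_pos_iff.1 (Nat.pos_of_mul_pos_left (hv.trans_le' (by omega)))
      exact ⟨y, List.mem_toFinset.2 hy, of_decide_eq_true hyv⟩
    -- sort by the last coordinate and use nets of `4 K` prefixes for the first `D` coordinates
    set ls := l.mergeSort fun a b => decide (ρ a (Fin.last D) ≤ ρ b (Fin.last D))
    have hperm : ls.Perm l := List.mergeSort_perm _ _
    have hsorted : ls.Pairwise fun a b => ρ a (Fin.last D) ≤ ρ b (Fin.last D) := by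
      simpa using List.pairwise_mergeSort
        (le := fun a b => decide (ρ a (Fin.last D) ≤ ρ b (Fin.last D)))
        (fun a b c hab hbc => by simp_all only [decide_eq_true_eq]; exact hab.trans hbc)
        (fun a b => by simpa using le_total _ _) l
    choose S hSl hScard hSnet using
      fun k => hs (fun a => Fin.init (ρ a)) (ls.take (ls.length / (2 * K) * k))
    refine ⟨(range (4 * K)).biUnion S, fun y hy => ?_, ?_, fun v hv => ?_⟩
    · obtain ⟨k, -, hyS⟩ := mem_biUnion.1 hy
      exact hperm.subset (List.take_subset _ _ (hSl k y hyS))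
    · refine (card_biUnion_le_card_mul _ _ _ fun k _ => hScard k).trans ?_
      rw [card_range]
      omega
    rw [← hperm.countP_eq, ← hperm.length_eq] at hv
    obtain ⟨k, hk, hlow, hdense⟩ := exists_dense_prefix (p := (ρ · ≤ v))
      (q := fun a => ρ a (Fin.last D) ≤ v (Fin.last D)) (fun a ha => ha _)
      (hsorted.imp fun hab hb => hab.trans hb) (by rw [hperm.length_eq]; omega) hv
    obtain ⟨y, hyS, hy⟩ := hSnet k (Fin.init v) ((List.length_take_le' _ _).trans_lt
      (hdense.trans_le (Nat.mul_le_mul_left _ (List.countP_mono_left fun a _ ha => by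
        simp only [decide_eq_true_eq] at ha ⊢; exact fun i => ha i.castSucc))))
    exact ⟨y, mem_biUnion.2 ⟨k, mem_range.2 hk, hyS⟩,
      Fin.forall_fin_succ'.2 ⟨hy, hlow y (hSl k y hyS)⟩⟩

theorem two_pow_mul_pow_le_succ_pow {M : ℕ} (hM : 0 < M) (n : ℕ) :
    2 ^ n * M ^ (M * n) ≤ (M + 1) ^ (M * n) := by
  have h := pow_add_mul_le_add_pow (a := M) (b := 1) (Nat.zero_le _) (by omega) M
  rw [Nat.cast_id, mul_one, mul_pow_sub_one hM.ne'] at h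
  rw [pow_mul, pow_mul, ← mul_pow]
  exact Nat.pow_le_pow_left (by omega) n

section MultiplicativeWeights

variable (r : α → ι → Prop) (X : Finset α) (F : Finset ι) (K : ℕ)

/-- Multiplicative weights: relative to the others, the weight `2 ^ (t - hits)` of a member is
halved each time the chosen point hits it, and a heavy point makes the total decay geometrically. -/
theorem exists_list_sum_pow_le
    (hheavy : ∀ w : ι → ℕ, (∀ i ∈ F, 0 < w i) →
      ∃ x ∈ X, ∑ i ∈ F, w i ≤ 2 * K * ∑ i ∈ F with r x i, w i) (t : ℕ) :
    ∃ xs : List α, xs.length = t ∧ (∀ x ∈ xs, x ∈ X) ∧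
      (∑ i ∈ F, 2 ^ (t - xs.countP (r · i))) * (2 * K) ^ t ≤ #F * (4 * K - 1) ^ t := by
  induction t with
  | zero => exact ⟨[], rfl, by simp, by simp⟩
  | succ t ih =>
    obtain ⟨xs, hlen, hX, hsum⟩ := ih
    obtain ⟨x, hx, hxheavy⟩ :=
      hheavy (fun i => 2 ^ (t - xs.countP (r · i))) (fun _ _ => by positivity)
    refine ⟨x :: xs, by simp [hlen], by simpa using ⟨hx, hX⟩, ?_⟩
    set W := ∑ i ∈ F, 2 ^ (t - xs.countP (r · i))
    set H := ∑ i ∈ F with r x i, 2 ^ (t - xs.countP (r · i))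
    set W' := ∑ i ∈ F, 2 ^ (t + 1 - (x :: xs).countP (r · i))
    have hW' : W' + H = 2 * W := by
      simp only [W', H, W, sum_filter, ← sum_add_distrib, mul_sum]
      refine sum_congr rfl fun i _ => ?_
      have : xs.countP (r · i) ≤ t := hlen ▸ List.countP_le_length
      by_cases hri : r x i
      · simp only [List.countP_cons, hri, decide_true, if_true]
        rw [show t + 1 - (xs.countP (r · i) + 1) = t - xs.countP (r · i) by omega]
        ring
      · simp only [List.countP_cons, hri, decide_false, Bool.false_eq_true, if_false]
        rw [show t + 1 - (xs.countP (r · i) + 0) = t - xs.countP (r · i) + 1 by omega, pow_succ]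
        ring
    have hstep : W' * (2 * K) ≤ (4 * K - 1) * W := by
      rcases Nat.eq_zero_or_pos K with rfl | hK
      · simp
      · obtain ⟨M, hM⟩ : ∃ M, 4 * K = M + 1 := ⟨4 * K - 1, by omega⟩
        rw [show 4 * K - 1 = M by omega]
        nlinarith
    calc W' * (2 * K) ^ (t + 1) = W' * (2 * K) * (2 * K) ^ t := by ring
      _ ≤ (4 * K - 1) * W * (2 * K) ^ t := Nat.mul_le_mul_right _ hstep
      _ = (4 * K - 1) * (W * (2 * K) ^ t) := by ring
      _ ≤ (4 * K - 1) * (#F * (4 * K - 1) ^ t) := Nat.mul_le_mul_left _ hsum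
      _ = #F * (4 * K - 1) ^ (t + 1) := by ring

theorem exists_list_forall_length_lt_mul_countP (hK : 0 < K)
    (hheavy : ∀ w : ι → ℕ, (∀ i ∈ F, 0 < w i) →
      ∃ x ∈ X, ∑ i ∈ F, w i ≤ 2 * K * ∑ i ∈ F with r x i, w i) :
    ∃ xs : List α, (∀ x ∈ xs, x ∈ X) ∧ ∀ i ∈ F, xs.length < 8 * K * xs.countP (r · i) := by
  set M := 4 * K - 1
  obtain ⟨xs, hlen, hX, hsum⟩ := exists_list_sum_pow_le r X F K hheavy (M * (2 * #F))
  refine ⟨xs, hX, fun i hi => ?_⟩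
  set h := xs.countP (r · i)
  set T := M * (2 * #F)
  have hhT : h ≤ T := hlen ▸ List.countP_le_length
  -- comparing the weight `2 ^ (T - h)` of `i` with the total weight forces `#F < h`
  have hweight : (M + 1) ^ T ≤ 2 ^ h * (#F * M ^ T) := by
    calc (M + 1) ^ T = 2 ^ h * (2 ^ (T - h) * (2 * K) ^ T) := by
          rw [← mul_assoc, ← pow_add, Nat.add_sub_cancel' hhT, ← mul_pow]
          congr 1; omega
      _ ≤ 2 ^ h * (#F * M ^ T) := Nat.mul_le_mul_left _
          ((Nat.mul_le_mul_right _ (single_le_sum (fun j _ => Nat.zero_le _) hi)).trans hsum)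
  have hpow : 2 ^ (2 * #F) ≤ 2 ^ h * #F := by
    refine le_of_mul_le_mul_right ?_ (pow_pos (show 0 < M by omega) T)
    calc 2 ^ (2 * #F) * M ^ T ≤ (M + 1) ^ T := two_pow_mul_pow_le_succ_pow (by omega) _
      _ ≤ 2 ^ h * #F * M ^ T := by rw [mul_assoc]; exact hweight
  have hFh : #F < h := by
    have : 2 ^ (2 * #F) < 2 ^ (h + #F) := by
      rw [pow_add]
      exact hpow.trans_lt (Nat.mul_lt_mul_of_pos_left Nat.lt_two_pow_self (by positivity))
    have := (Nat.pow_lt_pow_iff_right (by norm_num)).1 this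
    omega
  rw [hlen]
  calc T = M * (2 * #F) := rfl
    _ < M * (2 * h) := Nat.mul_lt_mul_of_pos_left (by omega) (by omega)
    _ ≤ 8 * K * h := by have : M + 1 = 4 * K := by omega
                        nlinarith

end MultiplicativeWeights

theorem exists_weighted_heavy_point (p D : ℕ) :
    ∃ n₀ K : ℕ, 0 < K ∧ ∀ (X : Finset α) (ρ : α → Fin D → β) (F : Finset ι) (v : ι → Fin D → β),
      (∀ i ∈ F, ∃ x ∈ X, ρ x ≤ v i) → HasPTwoProperty p X ρ v F → n₀ ≤ #F →
        ∀ w : ι → ℕ, (∀ i ∈ F, 0 < w i) →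
          ∃ x ∈ X, ∑ i ∈ F, w i ≤ 2 * K * ∑ i ∈ F with ρ x ≤ v i, w i := by
  obtain ⟨R, K, hK, hR⟩ := exists_point_mem_many (α := α) (ι := (_ : ι) × ℕ) (β := β) p D
  refine ⟨max R (2 * D), K, hK, fun X ρ F v hne hF hF₀ w hw => ?_⟩
  have hsum : #F ≤ ∑ i ∈ F, w i := card_eq_sum_ones F ▸ sum_le_sum hw
  obtain ⟨x, hx, hxF⟩ := hR X ρ (F.sigma fun i => range (w i)) (fun s => v s.1)
    (hF.sigma hne w) (by simp only [card_sigma, card_range]; omega)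
  have hfilter : {s ∈ F.sigma fun i => range (w i) | ρ x ≤ v s.1} =
      {i ∈ F | ρ x ≤ v i}.sigma fun i => range (w i) := by
    ext ⟨i, k⟩
    simp only [mem_filter, mem_sigma]
    tauto
  rw [hfilter] at hxF
  simp only [card_sigma, card_range] at hxF
  refine ⟨x, hx, ?_⟩
  rw [mul_assoc]
  omega

theorem exists_subset_card_le_of_forall_exists {r : α → ι → Prop} {X : Finset α} {F : Finset ι}
    (h : ∀ i ∈ F, ∃ x ∈ X, r x i) : ∃ S ⊆ X, #S ≤ #F ∧ ∀ i ∈ F, ∃ x ∈ S, r x i := by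
  refine ⟨F.attach.image fun i => (h i.1 i.2).choose, fun x hx => ?_,
    card_image_le.trans card_attach.le,
    fun i hi => ⟨_, mem_image_of_mem _ (mem_attach _ ⟨i, hi⟩), (h i hi).choose_spec.2⟩⟩
  obtain ⟨i, -, rfl⟩ := mem_image.1 hx
  exact (h i.1 i.2).choose_spec.1

theorem exists_piercing_bound (p D : ℕ) :
    ∃ N : ℕ, ∀ (X : Finset α) (ρ : α → Fin D → β) (F : Finset ι) (v : ι → Fin D → β),
      (∀ i ∈ F, ∃ x ∈ X, ρ x ≤ v i) → HasPTwoProperty p X ρ v F →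
        ∃ S ⊆ X, #S ≤ N ∧ ∀ i ∈ F, ∃ x ∈ S, ρ x ≤ v i := by
  obtain ⟨n₀, K, hK, hheavy⟩ := exists_weighted_heavy_point (α := α) (ι := ι) (β := β) p D
  obtain ⟨s, hnet⟩ := exists_orthant_net (α := α) (β := β) D (8 * K)
  refine ⟨n₀ + s, fun X ρ F v hne hF => ?_⟩
  by_cases hsmall : #F < n₀
  · obtain ⟨S, hSX, hScard, hS⟩ := exists_subset_card_le_of_forall_exists hne
    exact ⟨S, hSX, by omega, hS⟩
  obtain ⟨xs, hxsX, hxs⟩ := exists_list_forall_length_lt_mul_countP (fun x i => ρ x ≤ v i) X F K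
    hK (hheavy X ρ F v hne hF (by omega))
  obtain ⟨S, hSxs, hScard, hS⟩ := hnet ρ xs
  exact ⟨S, fun y hy => hxsX y (hSxs y hy), by omega, fun i hi => hS (v i) (hxs i hi)⟩

end OrthantPiercing

theorem mem_box_iff_append_le {G : Type*} [AddCommGroup G] [PartialOrder G] [IsOrderedAddMonoid G]
    {d : ℕ} {a b x : Fin d → G} :
    x ∈ {y : Fin d → G | ∀ i, y i ∈ Set.Icc (a i) (b i)} ↔
      Fin.append x (-x) ≤ Fin.append b (-a) := by
  simp only [Set.mem_ofPred_eq, Set.mem_Icc, Pi.le_def, Fin.forall_fin_add, Fin.append_left,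
    Fin.append_right, Pi.neg_apply, neg_le_neg_iff, forall_and]
  tauto

theorem stmt_18_general (p q d : ℕ) (hq : 2 ≤ q) :
    ∃ N : ℕ, ∀ (P : Finset (Fin d → ℝ)) (B : Finset (Set (Fin d → ℝ))),
      (∀ b ∈ B, IsBox b) →
      (∀ b ∈ B, ∃ x ∈ P, x ∈ b) →
      (∀ G ⊆ B, G.card = p → ∃ H ⊆ G, H.card = q ∧ ∃ x ∈ P, ∀ b ∈ H, x ∈ b) →
      ∃ S ⊆ P, S.card ≤ N ∧ ∀ b ∈ B, ∃ x ∈ S, x ∈ b := by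
  obtain ⟨N, hN⟩ := OrthantPiercing.exists_piercing_bound (α := Fin d → ℝ)
    (ι := Set (Fin d → ℝ)) (β := ℝ) p (d + d)
  refine ⟨N, fun P B hbox hne hpq => ?_⟩
  choose! a b hab using hbox
  have hmem : ∀ s ∈ B, ∀ x, x ∈ s ↔ Fin.append x (-x) ≤ Fin.append (b s) (-a s) :=
    fun s hs x => (Set.ext_iff.1 (hab s hs) x).trans mem_box_iff_append_le
  have hpTwo : OrthantPiercing.HasPTwoProperty p P (fun x => Fin.append x (-x))
      (fun s => Fin.append (b s) (-a s)) B := by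
    intro A hA hAcard
    obtain ⟨H, hHA, hHcard, x, hx, hxH⟩ := hpq A hA hAcard
    obtain ⟨i, hi, j, hj, hij⟩ := Finset.one_lt_card.1 (show 1 < H.card by omega)
    exact ⟨i, hHA hi, j, hHA hj, hij, x, hx, (hmem i (hA (hHA hi)) x).1 (hxH i hi),
      (hmem j (hA (hHA hj)) x).1 (hxH j hj)⟩
  obtain ⟨S, hSP, hScard, hS⟩ := hN P _ B _
    (fun s hs => (hne s hs).imp fun x ⟨hx, hxs⟩ => ⟨hx, (hmem s hs x).1 hxs⟩) hpTwo
  exact ⟨S, hSP, hScard, fun s hs => (hS s hs).imp fun x ⟨hx, hxs⟩ => ⟨hx, (hmem s hs x).2 hxs⟩⟩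

/-- `(p,q)`-type Halman theorem for `p ≥ q ≥ 2`: there is `N = N(p,q,d)` such that for
every finite `P ⊂ ℝ^d` and every finite family `B` of boxes whose trace on `P` has the
`(p,q)` property and contains no empty set, the trace can be pierced by at most `N`
points of `P`. -/
theorem stmt_18 (p q d : ℕ) (hq : 2 ≤ q) (hpq : q ≤ p) (hd : 1 ≤ d) :
    ∃ N : ℕ, ∀ (P : Finset (Fin d → ℝ)) (B : Finset (Set (Fin d → ℝ))),
      (∀ b ∈ B, IsBox b) →
      (∀ b ∈ B, ∃ x ∈ P, x ∈ b) →
      (∀ G ⊆ B, G.card = p → ∃ H ⊆ G, H.card = q ∧ ∃ x ∈ P, ∀ b ∈ H, x ∈ b) →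
      ∃ S ⊆ P, S.card ≤ N ∧ ∀ b ∈ B, ∃ x ∈ S, x ∈ b :=
  stmt_18_general p q d hq
end
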